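/- arXiv:1204.5780 — 2 statements merged into one kernel-verified Lean document; each statement's English description precedes it below -/
import Mathlib

section
/- Every correlated stable matching game with friendship utilities (equal reward sharing) on a finite graph admits at least one stable matching. -/
open Finset

variable {V : Type*} [Fintype V] [DecidableEq V]

/-- `partnerReward r M x` is the reward share that node `x` obtains in matching `M`:
`r x y` if `x` is matched to `y`, and `0` if `x` is unmatched. -/
def partnerReward (r : V → V → ℝ) (M : V → Option V) (x : V) : ℝ :=
  match M x with
  | some y => r x y
  | none => 0

/-- `M : V → Option V` encodes a matching in graph `G`. -/
def IsMatching (G : SimpleGraph V) (M : V → Option V) : Prop :=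
  (∀ u v, M u = some v → G.Adj u v) ∧ (∀ u v, M u = some v → M v = some u)

/-- The matching obtained when `u` and `v` abandon their current partners (if any)
and match to each other. -/
def rematch (M : V → Option V) (u v : V) : V → Option V :=
  fun x => if x = u then some v else if x = v then some u
    else if M x = some u ∨ M x = some v then none else M x

/-- The perceived (friendship) utility of node `v`:
`U_v = R_v + ∑_d α_d ∑_{u ∈ N_d(v)} R_u`, where the sum over nodes at distance `d`
is encoded via `α (G.dist v u)` (with `α 0 = 0` for unreachable/irrelevant pairs). -/
noncomputable def util (G : SimpleGraph V) (r : V → V → ℝ) (α : ℕ → ℝ)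
    (M : V → Option V) (v : V) : ℝ :=
  partnerReward r M v +
    ∑ u ∈ univ.filter (fun u => u ≠ v), α (G.dist v u) * partnerReward r M u

/-- `(u,v)` is a blocking pair for `M`: they are adjacent, not matched to each other,
and both strictly increase their perceived utility by matching to each other. -/
def IsBlockingPair (G : SimpleGraph V) (r : V → V → ℝ) (α : ℕ → ℝ)
    (M : V → Option V) (u v : V) : Prop :=
  G.Adj u v ∧ M u ≠ some v ∧
    util G r α M u < util G r α (rematch M u v) u ∧
    util G r α M v < util G r α (rematch M u v) v

/-- A stable matching: a matching admitting no blocking pair. -/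
def StableMatching (G : SimpleGraph V) (r : V → V → ℝ) (α : ℕ → ℝ)
    (M : V → Option V) : Prop :=
  IsMatching G M ∧ ∀ u v, ¬ IsBlockingPair G r α M u v

/-- Total weight of a matching under equal sharing (each edge counted once). -/
noncomputable def matchWeight (r : V → V → ℝ) (M : V → Option V) : ℝ :=
  (∑ v, partnerReward r M v) / 2

/-- Total reward of a matching under general reward sharing (sum of all shares). -/
noncomputable def totalWeight (r : V → V → ℝ) (M : V → Option V) : ℝ :=
  ∑ v, partnerReward r M v

/-- Admissible friendship parameters: `1 ≥ α₁ ≥ α₂ ≥ … ≥ 0` (and `α 0 = 0` as a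
convention so that only distances `d ≥ 1` contribute). -/
def FriendshipVec (α : ℕ → ℝ) : Prop :=
  α 0 = 0 ∧ α 1 ≤ 1 ∧ (∀ d, 0 ≤ α d) ∧ ∀ d e, 1 ≤ d → d ≤ e → α e ≤ α d


section Aux

lemma rematch_left (M : V → Option V) (u v : V) : rematch M u v u = some v := by
  simp [rematch]

lemma rematch_right (M : V → Option V) (u v : V) (h : v ≠ u) :
    rematch M u v v = some u := by
  simp [rematch, h]

lemma rematch_other (M : V → Option V) (u v x : V) (h1 : x ≠ u) (h2 : x ≠ v)
    (h3 : M x ≠ some u) (h4 : M x ≠ some v) : rematch M u v x = M x := by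
  simp [rematch, h1, h2, h3, h4]

lemma rematch_drop (M : V → Option V) (u v x : V) (h1 : x ≠ u) (h2 : x ≠ v)
    (h3 : M x = some u ∨ M x = some v) : rematch M u v x = none := by
  simp [rematch, h1, h2, h3]

lemma rematch_comm (M : V → Option V) (u v : V) (h : u ≠ v) :
    rematch M u v = rematch M v u := by
  funext x
  by_cases h1 : x = u <;> by_cases h2 : x = v
  · exact absurd (h1 ▸ h2) h
  · simp [rematch, h1, h2, h]
  · simp [rematch, h1, h2, h]
  · by_cases h3 : M x = some u ∨ M x = some v
    · rw [rematch_drop M u v x h1 h2 h3, rematch_drop M v u x h2 h1 (Or.symm h3)]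
    · rw [rematch_other M u v x h1 h2 (fun hc => h3 (Or.inl hc)) (fun hc => h3 (Or.inr hc)),
        rematch_other M v u x h2 h1 (fun hc => h3 (Or.inr hc)) (fun hc => h3 (Or.inl hc))]

lemma util_rematch_le (G : SimpleGraph V) (r : V → V → ℝ) (α : ℕ → ℝ)
    (hr_symm : ∀ u v, r u v = r v u) (hr_nonneg : ∀ u v, 0 ≤ r u v)
    (hα : FriendshipVec α) (M : V → Option V) (hM : IsMatching G M)
    (u v w : V) (huv : G.Adj u v) (hne : M u ≠ some v) (hw : M u = some w)
    (hrw : r u v ≤ r u w) :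
    util G r α (rematch M u v) u ≤ util G r α M u := by
  obtain ⟨hα0, hα1, hαnn, hαmono⟩ := hα
  have hvu : v ≠ u := huv.ne'
  have huw : G.Adj u w := hM.1 u w hw
  have hwu : w ≠ u := huw.ne'
  have hwv : w ≠ v := fun h => hne (h ▸ hw)
  have hMw : M w = some u := hM.2 u w hw
  have hduv : G.dist u v = 1 := SimpleGraph.dist_eq_one_iff_adj.mpr huv
  have hduw : G.dist u w = 1 := SimpleGraph.dist_eq_one_iff_adj.mpr huw
  set M' := rematch M u v with hM'
  have hpru' : partnerReward r M' u = r u v := by simp [partnerReward, hM', rematch_left]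
  have hpru : partnerReward r M u = r u w := by simp [partnerReward, hw]
  have hprv' : partnerReward r M' v = r v u := by
    simp [partnerReward, hM', rematch_right M u v hvu]
  have hprw' : partnerReward r M' w = 0 := by
    simp [partnerReward, hM', rematch_drop M u v w hwu hwv (Or.inl hMw)]
  have hprw : partnerReward r M w = r w u := by simp [partnerReward, hMw]
  have key : ∀ s : Finset V, (∀ x, x ≠ u → x ∉ s →
        α (G.dist u x) * partnerReward r M' x - α (G.dist u x) * partnerReward r M x = 0) →
      (∀ x ∈ s, x ≠ u) →
      (∑ x ∈ univ.filter (fun x => x ≠ u), α (G.dist u x) * partnerReward r M' x)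
        - (∑ x ∈ univ.filter (fun x => x ≠ u), α (G.dist u x) * partnerReward r M x)
      = ∑ x ∈ s, (α (G.dist u x) * partnerReward r M' x - α (G.dist u x) * partnerReward r M x) := by
    intro s hzero hs
    rw [← Finset.sum_sub_distrib]
    refine (Finset.sum_subset ?_ ?_).symm
    · intro x hx; simpa using hs x hx
    · intro x hx hxs
      exact hzero x (by simpa using hx) hxs
  have hα1nn : 0 ≤ α 1 := hαnn 1
  have unmoved : ∀ x, x ≠ u → x ≠ v → M x ≠ some u → M x ≠ some v →
      α (G.dist u x) * partnerReward r M' x - α (G.dist u x) * partnerReward r M x = 0 := by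
    intro x h1 h2 h3 h4
    have hpr : partnerReward r M' x = partnerReward r M x := by
      rw [hM']
      unfold partnerReward
      rw [rematch_other M u v x h1 h2 h3 h4]
    rw [hpr]
    ring
  have hMxu : ∀ x, M x = some u → x = w := by
    intro x hc
    have h := hM.2 x u hc
    rw [hw] at h
    exact (Option.some.inj h).symm
  cases hMv : M v with
  | none =>
    have hprv : partnerReward r M v = 0 := by simp [partnerReward, hMv]
    have hsum := key {v, w}
      (by
        intro x hxu hxs
        simp only [Finset.mem_insert, Finset.mem_singleton, not_or] at hxs
        refine unmoved x hxu hxs.1 (fun hc => hxs.2 (hMxu x hc)) (fun hc => ?_)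
        have h := hM.2 x v hc
        rw [hMv] at h
        exact nomatch h)
      (by
        intro x hx
        simp only [Finset.mem_insert, Finset.mem_singleton] at hx
        rcases hx with rfl | rfl
        exacts [hvu, hwu])
    have hvw : v ≠ w := fun h => hwv h.symm
    rw [Finset.sum_pair hvw, hprv', hprv, hprw', hprw, hduv, hduw] at hsum
    have h1 : r v u = r u v := hr_symm v u
    have h2 : r w u = r u w := hr_symm w u
    simp only [util]
    rw [hpru', hpru]
    nlinarith [hsum]
  | some p =>
    have hMp : M p = some v := hM.2 v p hMv
    have hpu : p ≠ u := fun h => hne (by rw [← h]; exact hMp)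
    have hpv : p ≠ v := (hM.1 v p hMv).ne'
    have hpw : p ≠ w := by
      intro h
      rw [h, hMw] at hMp
      exact hvu (Option.some.inj hMp).symm
    have hMxv : ∀ x, M x = some v → x = p := by
      intro x hc
      have h := hM.2 x v hc
      rw [hMv] at h
      exact (Option.some.inj h).symm
    have hprv : partnerReward r M v = r v p := by simp [partnerReward, hMv]
    have hprp' : partnerReward r M' p = 0 := by
      simp [partnerReward, hM', rematch_drop M u v p hpu hpv (Or.inr hMp)]
    have hprp : partnerReward r M p = r p v := by simp [partnerReward, hMp]
    have hsum := key {v, w, p}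
      (by
        intro x hxu hxs
        simp only [Finset.mem_insert, Finset.mem_singleton, not_or] at hxs
        exact unmoved x hxu hxs.1 (fun hc => hxs.2.1 (hMxu x hc))
          (fun hc => hxs.2.2 (hMxv x hc)))
      (by
        intro x hx
        simp only [Finset.mem_insert, Finset.mem_singleton] at hx
        rcases hx with rfl | rfl | rfl
        exacts [hvu, hwu, hpu])
    have hvmem : v ∉ ({w, p} : Finset V) := by
      simp only [Finset.mem_insert, Finset.mem_singleton, not_or]
      exact ⟨fun h => hwv h.symm, fun h => hpv h.symm⟩
    have hwmem : w ∉ ({p} : Finset V) := by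
      simp only [Finset.mem_singleton]
      exact fun h => hpw h.symm
    rw [Finset.sum_insert hvmem, Finset.sum_insert hwmem, Finset.sum_singleton,
      hprv', hprv, hprw', hprw, hprp', hprp, hduv, hduw] at hsum
    have h1 : r v u = r u v := hr_symm v u
    have h2 : r w u = r u w := hr_symm w u
    simp only [util]
    rw [hpru', hpru]
    nlinarith [hsum, hαnn (G.dist u p), hr_nonneg v p, hr_nonneg p v,
      mul_nonneg (hαnn (G.dist u p)) (hr_nonneg p v)]

lemma exists_greedy (G : SimpleGraph V) (r : V → V → ℝ)
    (hr_symm : ∀ u v, r u v = r v u) :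
    ∀ S : Finset V, ∃ M : V → Option V, IsMatching G M ∧
      (∀ x y, M x = some y → x ∈ S ∧ y ∈ S) ∧
      (∀ a b, a ∈ S → b ∈ S → G.Adj a b → M a ≠ some b →
        ∃ x w, (x = a ∨ x = b) ∧ M x = some w ∧ r a b ≤ r x w) := by
  classical
  intro S
  induction S using Finset.strongInduction with
  | _ S ih =>
    by_cases hE : ((S ×ˢ S).filter fun p => G.Adj p.1 p.2).Nonempty
    · obtain ⟨⟨u, v⟩, hmem, hmax⟩ :=
        Finset.exists_max_image _ (fun p => r p.1 p.2) hE
      simp only [Finset.mem_filter, Finset.mem_product] at hmem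
      obtain ⟨⟨huS, hvS⟩, hadj⟩ := hmem
      have huv : u ≠ v := hadj.ne
      have hss : S \ {u, v} ⊂ S :=
        Finset.sdiff_ssubset (by
          intro x hx
          simp only [Finset.mem_insert, Finset.mem_singleton] at hx
          rcases hx with rfl | rfl
          exacts [huS, hvS]) ⟨u, by simp⟩
      obtain ⟨M', hM', hdom', hgreedy'⟩ := ih _ hss
      have hnot : ∀ x y, M' x = some y → x ≠ u ∧ x ≠ v ∧ y ≠ u ∧ y ≠ v := by
        intro x y hxy
        obtain ⟨hx, hy⟩ := hdom' x y hxy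
        simp only [Finset.mem_sdiff, Finset.mem_insert, Finset.mem_singleton, not_or] at hx hy
        exact ⟨hx.2.1, hx.2.2, hy.2.1, hy.2.2⟩
      set N : V → Option V :=
        fun x => if x = u then some v else if x = v then some u else M' x with hN
      have hNu : N u = some v := by simp [hN]
      have hNv : N v = some u := by simp [hN, Ne.symm huv]
      have hNo : ∀ x, x ≠ u → x ≠ v → N x = M' x := by
        intro x h1 h2
        simp [hN, h1, h2]
      have hNinv : ∀ x y, N x = some y →
          (x = u ∧ y = v) ∨ (x = v ∧ y = u) ∨ (x ≠ u ∧ x ≠ v ∧ M' x = some y) := by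
        intro x y hxy
        by_cases h1 : x = u
        · subst h1
          rw [hNu] at hxy
          exact Or.inl ⟨rfl, (Option.some.inj hxy).symm⟩
        · by_cases h2 : x = v
          · subst h2
            rw [hNv] at hxy
            exact Or.inr (Or.inl ⟨rfl, (Option.some.inj hxy).symm⟩)
          · rw [hNo x h1 h2] at hxy
            exact Or.inr (Or.inr ⟨h1, h2, hxy⟩)
      refine ⟨N, ⟨?_, ?_⟩, ?_, ?_⟩
      · intro x y hxy
        rcases hNinv x y hxy with ⟨rfl, rfl⟩ | ⟨rfl, rfl⟩ | ⟨_, _, hxy⟩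
        · exact hadj
        · exact hadj.symm
        · exact hM'.1 x y hxy
      · intro x y hxy
        rcases hNinv x y hxy with ⟨rfl, rfl⟩ | ⟨rfl, rfl⟩ | ⟨_, _, hxy⟩
        · exact hNv
        · exact hNu
        · obtain ⟨_, _, hy1, hy2⟩ := hnot x y hxy
          rw [hNo y hy1 hy2]
          exact hM'.2 x y hxy
      · intro x y hxy
        rcases hNinv x y hxy with ⟨rfl, rfl⟩ | ⟨rfl, rfl⟩ | ⟨_, _, hxy⟩
        · exact ⟨huS, hvS⟩
        · exact ⟨hvS, huS⟩
        · obtain ⟨hx, hy⟩ := hdom' x y hxy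
          exact ⟨Finset.sdiff_subset hx, Finset.sdiff_subset hy⟩
      · intro a b haS hbS hab hMab
        have hmaxab : r a b ≤ r u v := by
          refine hmax (a, b) ?_
          simp only [Finset.mem_filter, Finset.mem_product]
          exact ⟨⟨haS, hbS⟩, hab⟩
        by_cases h1 : a = u
        · exact ⟨a, v, Or.inl rfl, h1 ▸ hNu, h1 ▸ hmaxab⟩
        · by_cases h2 : a = v
          · refine ⟨a, u, Or.inl rfl, h2 ▸ hNv, ?_⟩
            subst h2
            rw [hr_symm a u]
            exact hmaxab
          · by_cases h3 : b = u
            · exact ⟨b, v, Or.inr rfl, h3 ▸ hNu, h3 ▸ hmaxab⟩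
            · by_cases h4 : b = v
              · refine ⟨b, u, Or.inr rfl, h4 ▸ hNv, ?_⟩
                subst h4
                rw [hr_symm b u]
                exact hmaxab
              · have haS' : a ∈ S \ {u, v} := by
                  simp only [Finset.mem_sdiff, Finset.mem_insert, Finset.mem_singleton, not_or]
                  exact ⟨haS, h1, h2⟩
                have hbS' : b ∈ S \ {u, v} := by
                  simp only [Finset.mem_sdiff, Finset.mem_insert, Finset.mem_singleton, not_or]
                  exact ⟨hbS, h3, h4⟩
                obtain ⟨x, w, hx, hxw, hrle⟩ := hgreedy' a b haS' hbS' hab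
                  (by rw [hNo a h1 h2] at hMab; exact hMab)
                have hxuv : x ≠ u ∧ x ≠ v := by
                  rcases hx with rfl | rfl
                  exacts [⟨h1, h2⟩, ⟨h3, h4⟩]
                exact ⟨x, w, hx, by rw [hNo x hxuv.1 hxuv.2]; exact hxw, hrle⟩
    · refine ⟨fun _ => none, ⟨fun u v h => by simp at h,
        fun u v h => by simp at h⟩, fun x y h => by simp at h, ?_⟩
      intro a b haS hbS hab _
      exact absurd ⟨(a, b), by
        simp only [Finset.mem_filter, Finset.mem_product]
        exact ⟨⟨haS, hbS⟩, hab⟩⟩ hE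

end Aux

/-- every correlated stable matching game with friendship utilities
(equal reward sharing) on a finite graph admits a stable matching. -/
theorem exists_stable_matching_with_friendship
    (G : SimpleGraph V) (r : V → V → ℝ) (α : ℕ → ℝ)
    (hr_symm : ∀ u v, r u v = r v u) (hr_nonneg : ∀ u v, 0 ≤ r u v)
    (hα : FriendshipVec α) :
    ∃ M : V → Option V, StableMatching G r α M := by
  classical
  obtain ⟨M, hM, hdom, hgreedy⟩ := exists_greedy G r hr_symm Finset.univ
  refine ⟨M, hM, ?_⟩
  rintro u v ⟨hadj, hne, hu, hv⟩
  obtain ⟨x, w, hx, hxw, hrle⟩ :=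
    hgreedy u v (Finset.mem_univ u) (Finset.mem_univ v) hadj hne
  rcases hx with rfl | rfl
  · exact absurd hu (not_lt.mpr
      (util_rematch_le G r α hr_symm hr_nonneg hα M hM x v w hadj hne hxw hrle))
  · have hne' : M x ≠ some u := fun h => hne (hM.2 x u h)
    have hle := util_rematch_le G r α hr_symm hr_nonneg hα M hM x u w hadj.symm hne' hxw
      (by rw [hr_symm x u]; exact hrle)
    rw [rematch_comm M x u hadj.symm.ne] at hle
    exact absurd hv (not_lt.mpr hle)
end

section
/- In stable matching with oblivious unequal reward sharing and no friendship (α⃗=0), the price of anarchy is at most 1+R, where R = max over edges of the ratio of the larger to the smaller reward share. -/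
open Finset

variable {V : Type*} [Fintype V] [DecidableEq V]

lemma util_zero (G : SimpleGraph V) (r : V → V → ℝ) (M : V → Option V) (v : V) :
    util G r (fun _ => 0) M v = partnerReward r M v := by
  simp [util]

lemma partnerReward_rematch (r : V → V → ℝ) (M : V → Option V) (u v : V) :
    partnerReward r (rematch M u v) u = r u v := by
  simp [partnerReward, rematch]

lemma partnerReward_rematch' (r : V → V → ℝ) (M : V → Option V) {u v : V} (h : v ≠ u) :
    partnerReward r (rematch M u v) v = r v u := by
  simp [partnerReward, rematch, h]

lemma partnerReward_nonneg {G : SimpleGraph V} {r : V → V → ℝ} {M : V → Option V}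
    (hM : IsMatching G M) (hpos : ∀ u v, G.Adj u v → 0 < r u v) (x : V) :
    0 ≤ partnerReward r M x := by
  unfold partnerReward
  cases h : M x with
  | none => exact le_rfl
  | some y => exact (hpos x y (hM.1 x y h)).le

/-- with oblivious unequal reward sharing and no friendship (α⃗ = 0),
the price of anarchy is at most 1 + R. -/
theorem poa_unequal_sharing_no_friendship
    (G : SimpleGraph V) (r : V → V → ℝ) (R : ℝ)
    (hR : 1 ≤ R)
    (hpos : ∀ u v, G.Adj u v → 0 < r u v)
    (hratio : ∀ u v, G.Adj u v → r u v ≤ R * r v u)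
    (M Mstar : V → Option V)
    (hM : StableMatching G r (fun _ => 0) M) (hMstar : IsMatching G Mstar) :
    totalWeight r Mstar ≤ (1 + R) * totalWeight r M := by
  have hMm := hM.1
  have hstab := hM.2
  set σ : V → V := fun v => (Mstar v).getD v with hσ
  have hσinv : Function.Involutive σ := by
    intro v
    simp only [hσ]
    cases h : Mstar v with
    | none => simp [h]
    | some w => simp [h, hMstar.2 v w h]
  have hnn : ∀ x, 0 ≤ partnerReward r M x := partnerReward_nonneg hMm hpos
  have key : ∀ v, partnerReward r Mstar v ≤
      partnerReward r M v + R * partnerReward r M (σ v) := by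
    intro v
    cases h : Mstar v with
    | none =>
      have : partnerReward r Mstar v = 0 := by simp [partnerReward, h]
      rw [this]
      have := hnn v
      have := hnn (σ v)
      nlinarith [hnn v, hnn (σ v), hR]
    | some w =>
      have hadj : G.Adj v w := hMstar.1 v w h
      have hpw : partnerReward r Mstar v = r v w := by simp [partnerReward, h]
      have hσv : σ v = w := by simp [hσ, h]
      rw [hpw, hσv]
      by_cases hc : M v = some w
      · have : partnerReward r M v = r v w := by simp [partnerReward, hc]
        nlinarith [hnn w, hnn v, hpos v w hadj]
      · have hnb := hstab v w
        rw [IsBlockingPair] at hnb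
        push_neg at hnb
        rw [util_zero, util_zero, util_zero, util_zero,
          partnerReward_rematch, partnerReward_rematch' r M hadj.ne'] at hnb
        rcases lt_or_ge (partnerReward r M v) (r v w) with h1 | h1
        · have h2 := hnb hadj hc h1
          have h3 : r v w ≤ R * r w v := hratio v w hadj
          have h4 : R * r w v ≤ R * partnerReward r M w :=
            mul_le_mul_of_nonneg_left (not_lt.mp (by intro hcon; exact absurd hcon (not_lt.mpr h2))) (by linarith)
          nlinarith [hnn v]
        · nlinarith [hnn w, hR, hpos v w hadj]
    
  have hsum : ∑ v, partnerReward r M (σ v) = ∑ v, partnerReward r M v :=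
    Function.Bijective.sum_comp hσinv.bijective _
  calc totalWeight r Mstar = ∑ v, partnerReward r Mstar v := rfl
    _ ≤ ∑ v, (partnerReward r M v + R * partnerReward r M (σ v)) :=
        Finset.sum_le_sum fun v _ => key v
    _ = ∑ v, partnerReward r M v + R * ∑ v, partnerReward r M (σ v) := by
        rw [Finset.sum_add_distrib, Finset.mul_sum]
    _ = (1 + R) * totalWeight r M := by
        rw [hsum]; unfold totalWeight; ring
end
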